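/- Let W₁, W₂ ∈ ℂ^{n×m}, let R₁, R₂, C ∈ ℂ^{m×m}, let R̂ ∈ ℂ^{2m×2m} be the block matrix [[R₁, 0], [C, R₂]], let p ∈ ℂ[X], let α ∈ ℂ, and let Ŵ ∈ ℂ^{n×2m} be the matrix whose first m columns are those of W₁ and whose last m columns are those of W₂. Let F₂₁ ∈ ℂ^{m×m} denote the lower-left m×m block of p(R̂). Then α·(Ŵ·(p(R̂)·ê_1)) = α·(W₁·(p(R₁)·e_1)) + α·(W₂·(F₂₁·e_1)), where ê_1 is the first standard basis vector of ℂ^{2m} and e_1 the first standard basis vector of ℂ^m. -/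

import Mathlib

lemma pow_fromBlocks_lower {m : ℕ} (R₁ R₂ C : Matrix (Fin m) (Fin m) ℂ) (k : ℕ) :
    ∃ C', (Matrix.fromBlocks R₁ 0 C R₂) ^ k =
      Matrix.fromBlocks (R₁ ^ k) 0 C' (R₂ ^ k) := by
  induction k with
  | zero => exact ⟨0, by simp [Matrix.fromBlocks_one]⟩
  | succ k ih =>
    obtain ⟨C', hC'⟩ := ih
    refine ⟨C' * R₁ + R₂ ^ k * C, ?_⟩
    rw [pow_succ, pow_succ, pow_succ, hC', Matrix.fromBlocks_multiply]
    simp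

lemma aeval_fromBlocks_lower {m : ℕ} (R₁ R₂ C : Matrix (Fin m) (Fin m) ℂ) (p : Polynomial ℂ) :
    ∃ C', Polynomial.aeval (Matrix.fromBlocks R₁ 0 C R₂) p =
      Matrix.fromBlocks (Polynomial.aeval R₁ p) 0 C' (Polynomial.aeval R₂ p) := by
  induction p using Polynomial.induction_on' with
  | add p q hp hq =>
    obtain ⟨Cp, hp⟩ := hp; obtain ⟨Cq, hq⟩ := hq
    exact ⟨Cp + Cq, by simp [hp, hq, Matrix.fromBlocks_add]⟩
  | monomial k a =>
    obtain ⟨C', hC'⟩ := pow_fromBlocks_lower R₁ R₂ C k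
    refine ⟨a • C', ?_⟩
    simp [Polynomial.aeval_monomial, hC', Matrix.fromBlocks_smul, Algebra.algebraMap_eq_smul_one,
      smul_mul_assoc, Matrix.fromBlocks_smul, Matrix.smul_mul]

/-- For the restarted block matrix `Rhat = [[R₁, 0], [C, R₂]]` and the
combined basis `What = [W₁ W₂]`, the updated Krylov approximation satisfies
`α·What·p(Rhat)·ê₁ = α·W₁·p(R₁)·e₁ + α·W₂·F₂₁·e₁`, where `F₂₁` is the lower-left block
of `p(Rhat)`. -/
theorem restarted_approximation_update {n m : ℕ} (hm : 1 ≤ m)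
    (W₁ W₂ : Matrix (Fin n) (Fin m) ℂ) (R₁ R₂ C : Matrix (Fin m) (Fin m) ℂ)
    (Rhat : Matrix (Fin m ⊕ Fin m) (Fin m ⊕ Fin m) ℂ)
    (hRhat : Rhat = Matrix.fromBlocks R₁ 0 C R₂)
    (p : Polynomial ℂ) (α : ℂ)
    (What : Matrix (Fin n) (Fin m ⊕ Fin m) ℂ)
    (hWhat : What = Matrix.of fun i => Sum.elim (W₁ i) (W₂ i))
    (F₂₁ : Matrix (Fin m) (Fin m) ℂ)
    (hF : F₂₁ = (Polynomial.aeval Rhat p).toBlocks₂₁) :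
    α • What.mulVec ((Polynomial.aeval Rhat p).mulVec
        (Pi.single (Sum.inl (⟨0, by omega⟩ : Fin m) : Fin m ⊕ Fin m) 1)) =
      α • W₁.mulVec ((Polynomial.aeval R₁ p).mulVec (Pi.single (⟨0, by omega⟩ : Fin m) 1)) +
      α • W₂.mulVec (F₂₁.mulVec (Pi.single (⟨0, by omega⟩ : Fin m) 1)) := by
  obtain ⟨C', hC'⟩ := aeval_fromBlocks_lower R₁ R₂ C p
  rw [hRhat] at hF ⊢
  rw [hC'] at hF ⊢
  have hF' : F₂₁ = C' := by rw [hF]; rfl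
  subst hF' hWhat
  funext i
  simp [Matrix.mulVec, dotProduct, Matrix.fromBlocks, Pi.single_apply,
    Fintype.sum_sum_type, Finset.mul_sum, Finset.smul_sum, mul_add, smul_add,
    Finset.sum_add_distrib, mul_comm]
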